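/- For every integer k ≥ 1 and every real α ≥ 1, the one-dimensional Jackson-type kernel J_k(x) = c_k · sinc^{2k}(x/(2kπα)) satisfies the discrete partition-of-unity condition with respect to the integer nodes: Σ_{j∈ℤ} J_k(u − j) = 1 for every u ∈ ℝ. -/

import Mathlib

open MeasureTheory

noncomputable section

/-- The normalized cardinal sine: `sinc x = sin(πx)/(πx)` for `x ≠ 0`, `sinc 0 = 1`. -/
def sinc (x : ℝ) : ℝ :=
  if x = 0 then 1 else Real.sin (Real.pi * x) / (Real.pi * x)

/-- The one-dimensional Jackson-type kernel
`J_k(x) = c_k · sinc^{2k}(x/(2kπα))`, with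
`c_k = (∫ sinc^{2k}(u/(2kπα)) du)⁻¹`. -/
def jackson (k : ℕ) (α : ℝ) (x : ℝ) : ℝ :=
  (∫ u : ℝ, sinc (u / (2 * k * Real.pi * α)) ^ (2 * k))⁻¹ *
    sinc (x / (2 * k * Real.pi * α)) ^ (2 * k)

open Real hiding sinc sinc_zero abs_sinc_le_one continuous_sinc
open Filter Set Complex
open FourierTransform hiding fourier_zero
open Convolution Asymptotics

lemma sinc_zero : sinc 0 = 1 := by simp [sinc]

lemma sinc_of_ne (x : ℝ) (hx : x ≠ 0) : sinc x = Real.sin (π * x) / (π * x) := by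
  simp [sinc, hx]

lemma abs_sinc_le_one (x : ℝ) : |sinc x| ≤ 1 := by
  rcases eq_or_ne x 0 with h | h
  · simp [h, sinc_zero]
  · rw [sinc_of_ne x h, abs_div]
    rw [div_le_one (by positivity : (0:ℝ) < |π * x|)]
    exact Real.abs_sin_le_abs

lemma abs_sinc_le (x : ℝ) (hx : x ≠ 0) : |sinc x| ≤ 1 / (π * |x|) := by
  rw [sinc_of_ne x hx, abs_div, abs_mul, abs_of_pos Real.pi_pos]
  exact div_le_div_of_nonneg_right (abs_le.2 ⟨Real.neg_one_le_sin _, Real.sin_le_one _⟩) (by positivity)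

lemma continuous_sinc : Continuous sinc := by
  rw [continuous_iff_continuousAt]
  intro x
  rcases eq_or_ne x 0 with rfl | hx
  · have h1 : Tendsto (fun t : ℝ => Real.sin t / t) (nhdsWithin 0 {0}ᶜ) (nhds 1) := by
      have h := hasDerivAt_iff_tendsto_slope.1 (Real.hasDerivAt_sin 0)
      rw [Real.cos_zero] at h
      refine h.congr fun t => ?_
      simp [slope_def_field]
    have h2 : Tendsto (fun x : ℝ => π * x) (nhdsWithin 0 {0}ᶜ) (nhdsWithin 0 {0}ᶜ) := by
      rw [tendsto_nhdsWithin_iff]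
      refine ⟨?_, ?_⟩
      · have : Tendsto (fun x : ℝ => π * x) (nhds 0) (nhds (π * 0)) :=
          (continuous_const.mul continuous_id).tendsto 0
        simpa using this.mono_left nhdsWithin_le_nhds
      · filter_upwards [self_mem_nhdsWithin] with y hy
        simp only [mem_compl_iff, mem_singleton_iff] at hy ⊢
        exact mul_ne_zero (ne_of_gt Real.pi_pos) hy
    have h3 : Tendsto sinc (nhdsWithin 0 {0}ᶜ) (nhds 1) := by
      apply (h1.comp h2).congr'
      filter_upwards [self_mem_nhdsWithin] with y hy
      simp only [mem_compl_iff, mem_singleton_iff] at hy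
      simp [sinc_of_ne y hy, Function.comp]
    rw [ContinuousAt, sinc_zero, ← nhdsNE_sup_pure 0]
    exact h3.sup (by simpa [sinc_zero] using tendsto_pure_nhds sinc 0)
  · have : ContinuousAt (fun y => Real.sin (π * y) / (π * y)) x := by
      apply ContinuousAt.div
      · fun_prop
      · fun_prop
      · exact mul_ne_zero (ne_of_gt Real.pi_pos) hx
    apply this.congr
    filter_upwards [isOpen_compl_singleton.mem_nhds hx] with y hy
    simp only [mem_compl_iff, mem_singleton_iff] at hy
    simp [sinc_of_ne y hy]

variable {L : ℝ}

/-- the indicator whose Fourier transform is `sinc (·/L)` -/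
def box (L : ℝ) : ℝ → ℂ := Set.indicator (Icc (-(1/(2*L))) (1/(2*L))) (fun _ => (L:ℂ))

lemma box_integrable (hL : 0 < L) : Integrable (box L) := by
  rw [box, integrable_indicator_iff measurableSet_Icc]
  exact integrableOn_const measure_Icc_lt_top.ne

lemma box_supp (hL : 0 < L) (x : ℝ) (hx : 1/(2*L) < |x|) : box L x = 0 := by
  apply Set.indicator_of_notMem
  intro hmem
  rw [mem_Icc] at hmem
  exact absurd (abs_le.2 ⟨by linarith [hmem.1], hmem.2⟩) (not_le.2 hx)

lemma fourier_box (hL : 0 < L) (ξ : ℝ) : 𝓕 (box L) ξ = (sinc (ξ/L) : ℂ) := by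
  rw [Real.fourier_real_eq_integral_exp_smul]
  have hint : ∀ v : ℝ, Complex.exp (↑(-2 * π * v * ξ) * Complex.I) • box L v
      = Set.indicator (Icc (-(1/(2*L))) (1/(2*L)))
        (fun v => Complex.exp (((-2 * π * ξ : ℝ) : ℂ) * Complex.I * v) * L) v := by
    intro v
    rw [box]
    by_cases hv : v ∈ Icc (-(1/(2*L))) (1/(2*L))
    · rw [Set.indicator_of_mem hv, Set.indicator_of_mem hv, smul_eq_mul]
      congr 1
      congr 1
      push_cast
      ring
    · rw [Set.indicator_of_notMem hv, Set.indicator_of_notMem hv, smul_zero]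
  simp_rw [hint]
  rw [integral_indicator measurableSet_Icc, integral_Icc_eq_integral_Ioc,
    ← intervalIntegral.integral_of_le (by linarith [one_div_pos.2 (by linarith : (0:ℝ) < 2*L)] :
      -(1/(2*L)) ≤ 1/(2*L))]
  rcases eq_or_ne ξ 0 with rfl | hξ
  · rw [zero_div, sinc_zero]
    simp only [neg_mul, mul_zero, neg_zero, ofReal_zero, zero_mul, Complex.exp_zero, one_mul]
    rw [intervalIntegral.integral_const, sub_neg_eq_add, real_smul]
    push_cast
    have : (L:ℂ) ≠ 0 := by exact_mod_cast ne_of_gt hL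
    field_simp
    norm_num
  · have hc : ((-2 * π * ξ : ℝ) : ℂ) * Complex.I ≠ 0 := by
      apply mul_ne_zero _ Complex.I_ne_zero
      exact_mod_cast mul_ne_zero (mul_ne_zero (by norm_num) Real.pi_ne_zero) hξ
    rw [intervalIntegral.integral_mul_const, integral_exp_mul_complex hc]
    have hb : ((-2 * π * ξ : ℝ) : ℂ) * Complex.I * ((1/(2*L) : ℝ) : ℂ)
        = ((-(π * ξ / L) : ℝ) : ℂ) * Complex.I := by
      have : (L:ℂ) ≠ 0 := by exact_mod_cast ne_of_gt hL
      push_cast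
      field_simp
    have ha : ((-2 * π * ξ : ℝ) : ℂ) * Complex.I * ((-(1/(2*L)) : ℝ) : ℂ)
        = ((π * ξ / L : ℝ) : ℂ) * Complex.I := by
      have : (L:ℂ) ≠ 0 := by exact_mod_cast ne_of_gt hL
      push_cast
      field_simp
    rw [hb, ha]
    rw [Complex.exp_mul_I, Complex.exp_mul_I, ← Complex.ofReal_cos, ← Complex.ofReal_sin,
      ← Complex.ofReal_cos, ← Complex.ofReal_sin, Real.cos_neg, Real.sin_neg,
      sinc_of_ne _ (div_ne_zero hξ (ne_of_gt hL))]
    have hπξL : ((π * (ξ/L) : ℝ) : ℂ) ≠ 0 := by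
      exact_mod_cast mul_ne_zero (ne_of_gt Real.pi_pos) (div_ne_zero hξ (ne_of_gt hL))
    have hLne : (L:ℂ) ≠ 0 := by exact_mod_cast ne_of_gt hL
    push_cast
    push_cast at hπξL hc
    field_simp
    ring_nf

def efn (ξ : ℝ) : ℝ → ℂ := fun v => Complex.exp (((-2 * π * v * ξ : ℝ) : ℂ) * Complex.I)

lemma fourier_conv {f g : ℝ → ℂ} (hf : Integrable f) (hg : Integrable g) (ξ : ℝ) :
    𝓕 (f ⋆[ContinuousLinearMap.mul ℝ ℂ] g) ξ = 𝓕 f ξ * 𝓕 g ξ := by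
  set E : ℝ → ℂ := efn ξ with hE
  have hEcont : Continuous E := by
    apply Complex.continuous_exp.comp
    fun_prop
  have hEnorm : ∀ v, ‖E v‖ = 1 := fun v => by
    rw [hE, efn]
    simpa using Complex.norm_exp_ofReal_mul_I (-2 * π * v * ξ)
  have hEadd : ∀ x t : ℝ, E (x + t) = E x * E t := by
    intro x t
    rw [hE]
    simp only [efn]
    rw [← Complex.exp_add]
    congr 1
    push_cast
    ring
  have hG : Integrable (fun p : ℝ × ℝ => f p.2 * g (p.1 - p.2)) (volume.prod volume) := by
    simpa using hf.convolution_integrand (ContinuousLinearMap.mul ℝ ℂ) hg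
  have hF : Integrable (fun p : ℝ × ℝ => E p.1 * (f p.2 * g (p.1 - p.2)))
      (volume.prod volume) := by
    apply hG.bdd_mul (c := 1) ((hEcont.comp continuous_fst).aestronglyMeasurable)
    exact Filter.Eventually.of_forall fun p => le_of_eq (hEnorm p.1)
  have hFg : 𝓕 g ξ = ∫ v : ℝ, E v * g v := by
    rw [Real.fourier_real_eq_integral_exp_smul]
    simp_rw [smul_eq_mul, hE, efn]
  have hFf : 𝓕 f ξ = ∫ v : ℝ, E v * f v := by
    rw [Real.fourier_real_eq_integral_exp_smul]
    simp_rw [smul_eq_mul, hE, efn]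
  calc 𝓕 (f ⋆[ContinuousLinearMap.mul ℝ ℂ] g) ξ
      = ∫ v : ℝ, E v * (f ⋆[ContinuousLinearMap.mul ℝ ℂ] g) v := by
        rw [Real.fourier_real_eq_integral_exp_smul]
        simp_rw [smul_eq_mul, hE, efn]
    _ = ∫ v : ℝ, ∫ t : ℝ, E v * (f t * g (v - t)) := by
        congr 1
        ext v
        rw [convolution_def]
        simp_rw [ContinuousLinearMap.mul_apply']
        rw [← integral_const_mul]
    _ = ∫ t : ℝ, ∫ v : ℝ, E v * (f t * g (v - t)) := integral_integral_swap hF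
    _ = ∫ t : ℝ, E t * f t * 𝓕 g ξ := by
        congr 1
        ext t
        have h1 : ∀ v : ℝ, E v * (f t * g (v - t)) = f t * (E v * g (v - t)) := fun v => by ring
        simp_rw [h1]
        rw [integral_const_mul]
        have h2 : ∫ v : ℝ, E v * g (v - t) = E t * 𝓕 g ξ := by
          rw [← integral_add_right_eq_self (fun v => E v * g (v - t)) t]
          simp_rw [add_sub_cancel_right, hEadd]
          have h3 : ∀ x : ℝ, E x * E t * g x = E t * (E x * g x) := fun x => by ring
          simp_rw [h3]
          rw [integral_const_mul, hFg]
        rw [h2]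
        ring
    _ = 𝓕 f ξ * 𝓕 g ξ := by
        rw [integral_mul_const, hFf]
lemma exists_band (L : ℝ) (hL : 0 < L) :
    ∀ m : ℕ, 1 ≤ m → ∃ h : ℝ → ℂ, Integrable h ∧
      (∀ x : ℝ, (m : ℝ)/(2*L) < |x| → h x = 0) ∧
      ∀ ξ : ℝ, 𝓕 h ξ = (sinc (ξ/L) : ℂ)^m := by
  intro m hm
  induction m, hm using Nat.le_induction with
  | base =>
    refine ⟨box L, box_integrable hL, ?_, ?_⟩
    · intro x hx
      exact box_supp hL x (by simpa using hx)
    · intro ξ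
      rw [fourier_box hL, pow_one]
  | succ m hm ih =>
    obtain ⟨h, hInt, hSupp, hFT⟩ := ih
    refine ⟨h ⋆[ContinuousLinearMap.mul ℝ ℂ] box L,
      hInt.integrable_convolution (ContinuousLinearMap.mul ℝ ℂ) (box_integrable hL), ?_, ?_⟩
    · intro x hx
      by_contra hne
      have hx' : x ∈ Function.support (h ⋆[ContinuousLinearMap.mul ℝ ℂ] box L) := hne
      have := support_convolution_subset (ContinuousLinearMap.mul ℝ ℂ)
        (f := h) (g := box L) hx'
      obtain ⟨a, ha, b, hb, rfl⟩ := this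
      have ha' : |a| ≤ (m : ℝ)/(2*L) := by
        by_contra hc
        exact ha (hSupp a (not_le.1 hc))
      have hb' : |b| ≤ 1/(2*L) := by
        by_contra hc
        exact hb (box_supp hL b (not_le.1 hc))
      have : |a + b| ≤ ((m : ℝ) + 1)/(2*L) := by
        calc |a + b| ≤ |a| + |b| := abs_add_le a b
          _ ≤ (m : ℝ)/(2*L) + 1/(2*L) := add_le_add ha' hb'
          _ = ((m : ℝ) + 1)/(2*L) := by ring
      rw [show ((m + 1 : ℕ) : ℝ) = (m : ℝ) + 1 by push_cast; ring] at hx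
      linarith [lt_of_lt_of_le hx this]
    · intro ξ
      rw [fourier_conv hInt (box_integrable hL), hFT, fourier_box hL, pow_succ]



lemma sinc_pow_nonneg (k : ℕ) (y : ℝ) : 0 ≤ sinc y ^ (2*k) := by
  rw [pow_mul]; positivity

lemma sinc_pow_le_one (k : ℕ) (y : ℝ) : sinc y ^ (2*k) ≤ 1 := by
  rw [pow_mul]
  apply pow_le_one₀ (sq_nonneg _)
  rw [sq_le_one_iff_abs_le_one]
  exact abs_sinc_le_one y

lemma sinc_pow_bound (L : ℝ) (hL : 0 < L) (k : ℕ) (hk : 1 ≤ k) (x : ℝ) (hx : x ≠ 0) :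
    sinc (x/L) ^ (2*k) ≤ L^2 / (π^2 * x^2) := by
  have habs : sinc (x/L) ^ (2*k) = |sinc (x/L)| ^ (2*k) := by
    rw [← _root_.abs_pow, _root_.abs_of_nonneg (sinc_pow_nonneg k _)]
  have h0 : |sinc (x/L)| ^ (2*k) ≤ |sinc (x/L)| ^ 2 :=
    pow_le_pow_of_le_one (abs_nonneg _) (abs_sinc_le_one _) (by omega)
  have h3 : |sinc (x/L)| ≤ 1/(π * |x/L|) := abs_sinc_le _ (div_ne_zero hx hL.ne')
  have h4 : |sinc (x/L)|^2 ≤ (1/(π * |x/L|))^2 := by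
    apply pow_le_pow_left₀ (abs_nonneg _) h3
  have h5 : (1/(π * |x/L|))^2 = L^2/(π^2 * x^2) := by
    rw [abs_div, abs_of_pos hL]
    rw [show (x^2 : ℝ) = |x|^2 from (_root_.sq_abs x).symm]
    have hax : |x| ≠ 0 := abs_ne_zero.2 hx
    field_simp
  rw [habs]
  calc |sinc (x/L)| ^ (2*k) ≤ |sinc (x/L)| ^ 2 := h0
    _ ≤ (1/(π * |x/L|))^2 := h4
    _ = L^2/(π^2 * x^2) := h5

set_option maxHeartbeats 1600000 in
/-- The Jackson-type kernel satisfies the discrete partition-of-unity condition at the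
integer nodes: `∑_{j∈ℤ} J_k(u − j) = 1` for every `u ∈ ℝ`. -/
theorem jackson_partition_of_unity (k : ℕ) (hk : 1 ≤ k) (α : ℝ) (hα : 1 ≤ α) (u : ℝ) :
    ∑' j : ℤ, jackson k α (u - j) = 1 := by
  have hπ := Real.pi_pos
  have hπ3 := Real.pi_gt_three
  have hk1 : (1:ℝ) ≤ (k:ℝ) := by exact_mod_cast hk
  set L : ℝ := 2 * (k:ℝ) * π * α with hLdef
  have hL : 0 < L := by
    rw [hLdef]
    exact mul_pos (mul_pos (mul_pos two_pos (by linarith)) hπ) (by linarith)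
  set rf : ℝ → ℝ := fun x => sinc (x/L) ^ (2*k) with hrf
  have hrf_nonneg : ∀ x, 0 ≤ rf x := fun x => sinc_pow_nonneg k _
  have hrf_cont : Continuous rf := (continuous_sinc.comp (continuous_id.div_const L)).pow _
  have hrf_le_one : ∀ x, rf x ≤ 1 := fun x => sinc_pow_le_one k _
  have hrf_bound : ∀ x : ℝ, x ≠ 0 → rf x ≤ L^2/(π^2 * x^2) :=
    fun x hx => sinc_pow_bound L hL k hk x hx
  have hrf_int : Integrable rf := by
    apply Integrable.mono' (integrable_inv_one_add_sq.const_mul (L^2/π^2 + 1))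
      hrf_cont.aestronglyMeasurable
    filter_upwards with x
    rw [Real.norm_of_nonneg (hrf_nonneg x), ← div_eq_mul_inv,
      le_div_iff₀ (by positivity : (0:ℝ) < 1 + x^2)]
    rcases le_or_gt (x^2) (L^2/π^2) with hc | hc
    · nlinarith [hrf_le_one x, hrf_nonneg x]
    · have hx : x ≠ 0 := by
        intro h
        rw [h] at hc
        norm_num at hc
        nlinarith [sq_nonneg (L/π), div_pow L π 2, (by positivity : (0:ℝ) ≤ L^2/π^2)]
      have hb := hrf_bound x hx
      have hx2 : 0 < x^2 := by positivity
      have key1 : rf x * x^2 ≤ L^2/π^2 := by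
        calc rf x * x^2 ≤ L^2/(π^2 * x^2) * x^2 := mul_le_mul_of_nonneg_right hb hx2.le
          _ = L^2/π^2 := by field_simp
      nlinarith [hrf_le_one x, hrf_nonneg x]
  have hrpow : ∀ y : ℝ, |y| ^ (-(2:ℝ)) = (y^2)⁻¹ := by
    intro y
    rw [Real.rpow_neg (abs_nonneg y), show ((2:ℝ)) = ((2:ℕ):ℝ) by norm_num,
      Real.rpow_natCast, _root_.sq_abs]
  set I : ℝ := ∫ x : ℝ, rf x with hI
  have hIpos : 0 < I := by
    rw [hI]
    refine (integral_pos_iff_support_of_nonneg hrf_nonneg hrf_int).2 ?_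
    have hsub : Ioo (-L) L ⊆ Function.support rf := by
      intro x hx
      rw [mem_Ioo] at hx
      rcases eq_or_ne x 0 with rfl | hx0
      · simp [hrf, sinc_zero]
      · apply pow_ne_zero
        rw [sinc_of_ne _ (div_ne_zero hx0 hL.ne')]
        have h1 : -π < π * (x/L) := by
          have : -1 < x/L := by rw [neg_lt, ← neg_div]; exact (div_lt_one hL).2 (by linarith)
          nlinarith
        have h2 : π * (x/L) < π := by
          have : x/L < 1 := (div_lt_one hL).2 hx.2
          nlinarith
        apply div_ne_zero
        · rw [Ne, Real.sin_eq_zero_iff_of_lt_of_lt h1 h2]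
          exact mul_ne_zero (ne_of_gt hπ) (div_ne_zero hx0 hL.ne')
        · exact mul_ne_zero (ne_of_gt hπ) (div_ne_zero hx0 hL.ne')
    calc (0:ENNReal) < volume (Ioo (-L) L) := by
          rw [Real.volume_Ioo]
          apply ENNReal.ofReal_pos.2
          linarith
      _ ≤ volume (Function.support rf) := measure_mono hsub
  obtain ⟨h, hInt, hSupp, hFT⟩ := exists_band L hL (2*k) (by omega)
  have hFh : 𝓕 h = fun x : ℝ => ((rf x : ℝ) : ℂ) := by
    funext ξ
    rw [hFT ξ, hrf]
    exact (Complex.ofReal_pow _ _).symm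
  have hsmall : ((2*k : ℕ):ℝ)/(2*L) < 1 := by
    rw [div_lt_one (by linarith)]
    push_cast
    rw [hLdef]
    have hπα : (3:ℝ) ≤ π*α := by nlinarith
    nlinarith
  have hvanish : ∀ n : ℤ, n ≠ 0 → 𝓕 (fun x : ℝ => ((rf x : ℝ) : ℂ)) ↑n = 0 := by
    intro n hn
    have habs1 : (1:ℝ) ≤ |(n:ℝ)| := by
      rw [← Int.cast_abs]
      exact_mod_cast Int.one_le_abs hn
    have hmem : ((2*k : ℕ):ℝ)/(2*L) < |(-(n:ℝ))| := by rw [abs_neg]; linarith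
    have hev : ∀ᶠ x in nhds (-(n:ℝ)), h x = 0 := by
      have hopen : IsOpen {x : ℝ | ((2*k : ℕ):ℝ)/(2*L) < |x|} :=
        isOpen_lt continuous_const continuous_abs
      filter_upwards [hopen.mem_nhds hmem] with x hx
      exact hSupp x hx
    have hcont : ContinuousAt h (-(n:ℝ)) := Filter.EventuallyEq.continuousAt hev
    calc 𝓕 (fun x : ℝ => ((rf x : ℝ) : ℂ)) ↑n = 𝓕 (𝓕 h) ↑n := by rw [hFh]
      _ = 𝓕⁻ (𝓕 h) (-(↑n:ℝ)) := by rw [fourierInv_eq_fourier_neg, neg_neg]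
      _ = h (-(↑n:ℝ)) := hInt.fourierInv_fourier_eq (by rw [hFh]; exact hrf_int.ofReal) hcont
      _ = 0 := hSupp _ hmem
  have hF0 : 𝓕 (fun x : ℝ => ((rf x : ℝ) : ℂ)) 0 = ((I:ℝ):ℂ) := by
    rw [Real.fourier_real_eq]
    simp only [mul_zero, neg_zero, AddChar.map_zero_eq_one, one_smul]
    exact integral_ofReal
  have hsum_F : Summable fun n : ℤ => 𝓕 (fun x : ℝ => ((rf x : ℝ) : ℂ)) ↑n :=
    summable_of_ne_finset_zero (s := {(0:ℤ)}) fun n hn => hvanish n (by simpa using hn)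
  have hdecay : (fun x : ℝ => ((rf x : ℝ) : ℂ)) =O[cocompact ℝ] fun x : ℝ => |x| ^ (-(2:ℝ)) := by
    rw [isBigO_iff]
    refine ⟨L^2/π^2, ?_⟩
    have hev1 : ∀ᶠ x : ℝ in cocompact ℝ, 1 ≤ |x| := by
      rw [cocompact_eq_atBot_atTop, eventually_sup]
      constructor
      · filter_upwards [eventually_le_atBot (-1:ℝ)] with x hx
        rw [_root_.abs_of_nonpos (by linarith)]; linarith
      · filter_upwards [eventually_ge_atTop (1:ℝ)] with x hx
        rw [_root_.abs_of_nonneg (by linarith)]; linarith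
    filter_upwards [hev1] with x hx1
    have hx0 : x ≠ 0 := by
      intro hxx; rw [hxx] at hx1; simp at hx1; linarith
    have h2 : ‖((rf x : ℝ):ℂ)‖ = rf x := by
      rw [Complex.norm_real, Real.norm_of_nonneg (hrf_nonneg x)]
    rw [h2, Real.norm_of_nonneg (by rw [hrpow]; positivity), hrpow]
    calc rf x ≤ L^2/(π^2 * x^2) := hrf_bound x hx0
      _ = L^2/π^2 * (x^2)⁻¹ := by rw [← div_div, div_eq_mul_inv]
  have hsum_rf : Summable fun n : ℤ => rf (u + ↑n) := by
    apply summable_of_isBigO (Real.summable_abs_int_rpow one_lt_two)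
    rw [isBigO_iff]
    refine ⟨4*(L^2/π^2), ?_⟩
    have claim : ∀ n : ℤ, 2*|u|+1 < |(n:ℝ)| →
        ‖rf (u + ↑n)‖ ≤ 4*(L^2/π^2) * ‖|(n:ℝ)| ^ (-(2:ℝ))‖ := by
      intro n hn
      have hnne : (n:ℝ) ≠ 0 := by
        intro hh; rw [hh] at hn; simp at hn; linarith [abs_nonneg u]
      have h2 : |(n:ℝ)| ≤ |u + (n:ℝ)| + |u| := by
        calc |(n:ℝ)| = |(u + (n:ℝ)) + (-u)| := by congr 1; ring
          _ ≤ |u + (n:ℝ)| + |(-u)| := abs_add_le _ _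
          _ = |u + (n:ℝ)| + |u| := by rw [abs_neg]
      have habs2 : |(n:ℝ)|/2 ≤ |u + (n:ℝ)| := by linarith
      have hun : u + (n:ℝ) ≠ 0 := by
        intro h0; rw [h0] at habs2; simp at habs2; linarith [abs_nonneg u]
      have hsq : ((n:ℝ))^2/4 ≤ (u + (n:ℝ))^2 := by
        nlinarith [_root_.sq_abs (u + (n:ℝ)), _root_.sq_abs ((n:ℝ)),
          abs_nonneg (u + (n:ℝ)), abs_nonneg ((n:ℝ))]
      have hn2 : (0:ℝ) < ((n:ℝ))^2 := by positivity
      rw [Real.norm_of_nonneg (hrf_nonneg _), Real.norm_of_nonneg (by rw [hrpow]; positivity),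
        hrpow]
      calc rf (u + ↑n) ≤ L^2/(π^2 * (u + (n:ℝ))^2) := hrf_bound _ hun
        _ ≤ L^2/(π^2 * (((n:ℝ))^2/4)) := by
            apply div_le_div_of_nonneg_left (by positivity) (by positivity)
            nlinarith [Real.pi_pos]
        _ = 4*(L^2/π^2) * (((n:ℝ))^2)⁻¹ := by field_simp
    rw [eventually_cofinite]
    apply Set.Finite.subset (Set.finite_Icc (-(⌈2*|u|+1⌉:ℤ)) ⌈2*|u|+1⌉)
    intro n hn
    simp only [mem_setOf_eq] at hn
    rw [mem_Icc]
    by_contra hmem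
    apply hn
    apply claim
    have hMc : (2*|u|+1 : ℝ) ≤ ((⌈2*|u|+1⌉:ℤ) : ℝ) := Int.le_ceil _
    have hC : (0:ℤ) < ⌈2*|u|+1⌉ := by
      rw [Int.lt_ceil]
      push_cast
      linarith [abs_nonneg u]
    rw [not_and_or, not_le, not_le] at hmem
    have hint : (⌈2*|u|+1⌉:ℤ) < |n| := by
      rcases hmem with hm | hm
      · have h1 : -n ≤ |n| := neg_le_abs n
        omega
      · have h1 : n ≤ |n| := le_abs_self n
        omega
    have : ((⌈2*|u|+1⌉:ℤ):ℝ) < |(n:ℝ)| := by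
      rw [← Int.cast_abs]
      exact_mod_cast hint
    linarith
  have hrc : Continuous fun x : ℝ => ((rf x : ℝ) : ℂ) := Complex.continuous_ofReal.comp hrf_cont
  have hP := Real.tsum_eq_tsum_fourier_of_rpow_decay_of_summable hrc one_lt_two
    hdecay hsum_F u
  have hRHS : ∑' n : ℤ, 𝓕 (fun x : ℝ => ((rf x : ℝ) : ℂ)) ↑n * fourier n (u : UnitAddCircle)
      = ((I:ℝ):ℂ) := by
    rw [tsum_eq_single 0]
    · rw [fourier_zero, mul_one, Int.cast_zero, hF0]
    · intro n hn
      rw [hvanish n hn, zero_mul]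
  have key : ∑' n : ℤ, rf (u + ↑n) = I := by
    have hofreal : ((∑' n : ℤ, rf (u + ↑n) : ℝ) : ℂ) = ∑' n : ℤ, ((rf (u + ↑n) : ℝ) : ℂ) :=
      (Complex.hasSum_ofReal.2 hsum_rf.hasSum).tsum_eq.symm
    have hcomb : (∑' n : ℤ, ((rf (u + ↑n) : ℝ) : ℂ)) = ((I:ℝ):ℂ) := hP.trans hRHS
    apply Complex.ofReal_inj.1
    rw [hofreal, hcomb]
  have hjack : ∀ j : ℤ, jackson k α (u - ↑j) = I⁻¹ * rf (u - ↑j) := by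
    intro j
    simp only [jackson, hI, hrf, hLdef]
  calc ∑' j : ℤ, jackson k α (u - ↑j) = ∑' j : ℤ, I⁻¹ * rf (u - ↑j) :=
        tsum_congr fun j => hjack j
    _ = I⁻¹ * ∑' j : ℤ, rf (u - ↑j) := tsum_mul_left
    _ = I⁻¹ * ∑' n : ℤ, rf (u + ↑n) := by
        congr 1
        rw [← (Equiv.neg ℤ).tsum_eq (fun j : ℤ => rf (u - ↑j))]
        apply tsum_congr
        intro n
        simp [sub_neg_eq_add]
    _ = I⁻¹ * I := by rw [key]
    _ = 1 := inv_mul_cancel₀ (ne_of_gt hIpos)
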